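/- Let (X,d) be a complete metric space, k ∈ ℕ, and T : X^ℕ → X satisfy: for all u₁,…,u_k, v₁,…,v_k ∈ X, d(T(û), T(v̂)) ≤ β(M_k(û, v̂))·M_k(û, v̂), where û, v̂ are the hatted sequences with k-th entry repeated, β is a Geraghty function, and M_k(û, v̂) = max{ d(u_k, v_k), d(u_k, T(û)), d(v_k, T(v̂)) }. Then there exists u ∈ X such that T applied to the constant sequence (u,u,…) equals u, and the infinite k-Picard sequence from any base points x₁,…,x_k converges to u. -/

import Mathlib

open Filter Topology

def IsGeraghty (β : ℝ → ℝ) : Prop :=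
  (∀ t : ℝ, 0 ≤ t → 0 ≤ β t ∧ β t < 1) ∧
  (∀ t : ℕ → ℝ, (∀ n, 0 ≤ t n) →
    Filter.Tendsto (fun n => β (t n)) Filter.atTop (nhds 1) →
    Filter.Tendsto t Filter.atTop (nhds 0))

def hatSeq {X : Type*} (k : ℕ) (hk : 0 < k) (u : Fin k → X) : ℕ → X :=
  fun i => u ⟨min i (k - 1), by omega⟩

/-!
Along a `k`-Picard sequence let `y n` be the last entry of the `n`-th window, so that
`y (n + 1) = T (window n)` and the contraction reads `d(y (m+1), y (n+1)) ≤ β(M) M` with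
`M = max (d(y m, y n), d(y m, y (m+1)), d(y n, y (n+1)))`. For `n = m + 1` this makes the steps
`d(y n, y (n+1))` decrease, and if their limit were positive their ratios would force
`β(d(y n, y (n+1))) → 1`, against the Geraghty property. The same squeeze along pairs `m ≤ n`
with `d(y m, y n) < ε ≤ d(y m, y (n+1))` shows that `y` is Cauchy. Its limit is a fixed point of
`u ↦ T (u, u, …)`, which is unique; iterating that map is itself a Picard sequence (with
constant windows), which gives existence.
-/

namespace IsGeraghty

variable {β : ℝ → ℝ}

lemma eq_zero_of_le_mul (hβ : IsGeraghty β) {t : ℝ} (ht : 0 ≤ t) (h : t ≤ β t * t) :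
    t = 0 := by
  by_contra hne
  have := (hβ.1 t ht).2
  nlinarith [ht.lt_of_ne' hne]

lemma eq_zero_of_tendsto_of_le_mul (hβ : IsGeraghty β) {s t : ℕ → ℝ} {L : ℝ}
    (ht : ∀ n, 0 ≤ t n) (hs : Tendsto s atTop (𝓝 L)) (htL : Tendsto t atTop (𝓝 L))
    (h : ∀ n, s n ≤ β (t n) * t n) : L = 0 := by
  by_contra hL
  have hLpos : 0 < L := (ge_of_tendsto' htL ht).lt_of_ne' hL
  have hpos : ∀ᶠ n in atTop, 0 < t n := htL.eventually (lt_mem_nhds hLpos)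
  have hratio : Tendsto (fun n => s n / t n) atTop (𝓝 1) := by
    have := hs.div htL hL
    rwa [div_self hL] at this
  have hβt : Tendsto (fun n => β (t n)) atTop (𝓝 1) := by
    refine tendsto_of_tendsto_of_tendsto_of_le_of_le' hratio tendsto_const_nhds ?_ ?_
    · filter_upwards [hpos] with n hn using (div_le_iff₀ hn).2 (h n)
    · exact Eventually.of_forall fun n => (hβ.1 _ (ht n)).2.le
  exact hL (tendsto_nhds_unique htL (hβ.2 t ht hβt))

end IsGeraghty

lemma Metric.exists_dist_lt_le_dist_succ_of_not_cauchySeq {X : Type*} [PseudoMetricSpace X]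
    {y : ℕ → X} (hy : ¬ CauchySeq y) :
    ∃ ε > 0, ∀ m, ∃ n, m ≤ n ∧ dist (y m) (y n) < ε ∧
      ε ≤ dist (y m) (y (n + 1)) := by
  simp only [Metric.cauchySeq_iff', not_forall, not_exists, not_lt] at hy
  obtain ⟨ε, hε, hfar⟩ := hy
  refine ⟨ε, hε, fun m => ?_⟩
  obtain ⟨n, hmn, hn⟩ := hfar m
  obtain ⟨j, hj, hj1⟩ := Nat.exists_not_and_succ_of_not_zero_of_exists
    (p := fun j => ε ≤ dist (y m) (y (m + j))) (by simpa using hε)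
    ⟨n - m, by simpa [Nat.add_sub_cancel' hmn, dist_comm] using hn⟩
  exact ⟨m + j, by omega, not_le.1 hj, hj1⟩

/-- `M_k` along a sequence `y` in which `y (m + 1)` is the image of the window ending at `y m`. -/
def stepMax {X : Type*} [PseudoMetricSpace X] (y : ℕ → X) (m n : ℕ) : ℝ :=
  max (dist (y m) (y n)) (max (dist (y m) (y (m + 1))) (dist (y n) (y (n + 1))))

def IsGeraghtyOrbit {X : Type*} [PseudoMetricSpace X] (β : ℝ → ℝ) (y : ℕ → X) : Prop :=
  ∀ m n, dist (y (m + 1)) (y (n + 1)) ≤ β (stepMax y m n) * stepMax y m n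

namespace IsGeraghtyOrbit

variable {X : Type*} [MetricSpace X] {β : ℝ → ℝ} {y : ℕ → X}

lemma antitone_dist_succ (hy : IsGeraghtyOrbit β y) (hβ : IsGeraghty β) :
    Antitone fun n => dist (y n) (y (n + 1)) := by
  refine antitone_nat_of_succ_le fun n => ?_
  by_contra! hlt
  have h := hy n (n + 1)
  simp only [stepMax, max_eq_right hlt.le] at h
  exact (dist_nonneg.trans_lt hlt).ne' (hβ.eq_zero_of_le_mul dist_nonneg h)

lemma dist_succ_le_mul (hy : IsGeraghtyOrbit β y) (hβ : IsGeraghty β) (n : ℕ) :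
    dist (y (n + 1)) (y (n + 2)) ≤ β (dist (y n) (y (n + 1))) * dist (y n) (y (n + 1)) := by
  have h := hy n (n + 1)
  simpa only [stepMax, ← max_assoc, max_self,
    max_eq_left (hy.antitone_dist_succ hβ n.le_succ)] using h

lemma tendsto_dist_succ_zero (hy : IsGeraghtyOrbit β y) (hβ : IsGeraghty β) :
    Tendsto (fun n => dist (y n) (y (n + 1))) atTop (𝓝 0) := by
  set d := fun n => dist (y n) (y (n + 1))
  have hd : Tendsto d atTop (𝓝 (⨅ n, d n)) :=
    tendsto_atTop_ciInf (hy.antitone_dist_succ hβ)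
      ⟨0, by rintro _ ⟨n, rfl⟩; exact dist_nonneg⟩
  have hinf : ⨅ n, d n = 0 :=
    hβ.eq_zero_of_tendsto_of_le_mul (fun n => dist_nonneg)
      (hd.comp (tendsto_add_atTop_nat 1)) hd (hy.dist_succ_le_mul hβ)
  rwa [hinf] at hd

lemma cauchySeq (hy : IsGeraghtyOrbit β y) (hβ : IsGeraghty β) : CauchySeq y := by
  by_contra hy'
  obtain ⟨ε, hε, hpair⟩ := Metric.exists_dist_lt_le_dist_succ_of_not_cauchySeq hy'
  choose n hmn hnear hfar using hpair
  set d := fun n => dist (y n) (y (n + 1))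
  have hanti : Antitone d := hy.antitone_dist_succ hβ
  have hd : Tendsto d atTop (𝓝 0) := hy.tendsto_dist_succ_zero hβ
  have hdn : ∀ m, d (n m + 1) ≤ d m := fun m => hanti (by have := hmn m; omega)
  set M := fun m => stepMax y m (n m + 1)
  have hMlow : ∀ m, ε ≤ M m := fun m => (hfar m).trans (le_max_left _ _)
  have hMup : ∀ m, M m ≤ ε + d m := by
    intro m
    have hfar_le : dist (y m) (y (n m + 1)) ≤ ε + d m :=
      calc dist (y m) (y (n m + 1)) ≤ dist (y m) (y (n m)) + d (n m) := dist_triangle _ _ _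
        _ ≤ ε + d m := add_le_add (hnear m).le (hanti (hmn m))
    exact max_le hfar_le (max_le (by linarith) (by linarith [hdn m]))
  have hsqueeze : ∀ m, ε - 2 * d m ≤ β (M m) * M m := by
    intro m
    calc ε - 2 * d m ≤ dist (y m) (y (n m + 1)) - d m - d (n m + 1) := by
          linarith [hfar m, hdn m]
      _ ≤ dist (y (m + 1)) (y (n m + 1 + 1)) := by
        linarith [dist_triangle4 (y m) (y (m + 1)) (y (n m + 1 + 1)) (y (n m + 1)),
          dist_comm (y (n m + 1 + 1)) (y (n m + 1))]
      _ ≤ β (M m) * M m := hy m (n m + 1)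
  have hM : Tendsto M atTop (𝓝 ε) :=
    tendsto_of_tendsto_of_tendsto_of_le_of_le tendsto_const_nhds (by simpa using hd.const_add ε)
      hMlow hMup
  have hs : Tendsto (fun m => ε - 2 * d m) atTop (𝓝 ε) := by
    simpa using (hd.const_mul 2).const_sub ε
  exact hε.ne' (hβ.eq_zero_of_tendsto_of_le_mul (fun m => hε.le.trans (hMlow m)) hs hM hsqueeze)

end IsGeraghtyOrbit

@[simp]
lemma hatSeq_const {X : Type*} {k : ℕ} (hk : 0 < k) (u : X) :
    hatSeq k hk (fun _ => u) = fun _ => u := rfl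

section HkContraction

open Function

variable {X : Type*} [MetricSpace X] {k : ℕ} (hk : 0 < k)

/-- `M_k(û, v̂)` for the hatted sequences of `a` and `b`. -/
def hatMax (T : (ℕ → X) → X) (a b : Fin k → X) : ℝ :=
  max (dist (a ⟨k - 1, Nat.sub_lt hk one_pos⟩) (b ⟨k - 1, Nat.sub_lt hk one_pos⟩))
    (max (dist (a ⟨k - 1, Nat.sub_lt hk one_pos⟩) (T (hatSeq k hk a)))
      (dist (b ⟨k - 1, Nat.sub_lt hk one_pos⟩) (T (hatSeq k hk b))))

def IsHkContraction (β : ℝ → ℝ) (T : (ℕ → X) → X) : Prop :=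
  ∀ a b : Fin k → X,
    dist (T (hatSeq k hk a)) (T (hatSeq k hk b)) ≤ β (hatMax hk T a b) * hatMax hk T a b

variable {hk} {β : ℝ → ℝ} {T : (ℕ → X) → X}

lemma IsHkContraction.eq_of_isFixedPt (hT : IsHkContraction hk β T) (hβ : IsGeraghty β)
    {u v : X} (hu : IsFixedPt (fun w => T fun _ => w) u)
    (hv : IsFixedPt (fun w => T fun _ => w) v) : u = v := by
  have h := hT (fun _ => u) (fun _ => v)
  simp only [hatMax, hatSeq_const, hu.eq, hv.eq, dist_self, max_self,
    max_eq_left dist_nonneg] at h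
  exact dist_eq_zero.1 (hβ.eq_zero_of_le_mul dist_nonneg h)

lemma IsHkContraction.exists_isFixedPt_tendsto [CompleteSpace X] (hT : IsHkContraction hk β T)
    (hβ : IsGeraghty β) (a : ℕ → Fin k → X)
    (ha : ∀ n, T (hatSeq k hk (a n)) = a (n + 1) ⟨k - 1, Nat.sub_lt hk one_pos⟩) :
    ∃ u, IsFixedPt (fun w => T fun _ => w) u ∧
      Tendsto (fun n => a n ⟨k - 1, Nat.sub_lt hk one_pos⟩) atTop (𝓝 u) := by
  set y := fun n => a n ⟨k - 1, Nat.sub_lt hk one_pos⟩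
  have hy : IsGeraghtyOrbit β y := by
    intro m n
    have h := hT (a m) (a n)
    simp only [hatMax, ha] at h
    exact h
  obtain ⟨u, hu⟩ := cauchySeq_tendsto_of_complete (hy.cauchySeq hβ)
  refine ⟨u, ?_, hu⟩
  set S := T (fun _ => u)
  set M := fun n => hatMax hk T (a n) fun _ => u
  have hstep : ∀ n, dist (y (n + 1)) S ≤ β (M n) * M n := by
    intro n
    have h := hT (a n) fun _ => u
    rw [ha] at h
    exact h
  have hsucc : Tendsto (fun n => y (n + 1)) atTop (𝓝 u) := hu.comp (tendsto_add_atTop_nat 1)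
  have hM : Tendsto M atTop (𝓝 (dist u S)) := by
    have := (hu.dist (tendsto_const_nhds (x := u))).max
      ((hu.dist hsucc).max (tendsto_const_nhds (x := dist u S)))
    simpa [M, hatMax, ha] using this
  exact (dist_eq_zero.1 (hβ.eq_zero_of_tendsto_of_le_mul (fun n => le_max_of_le_left dist_nonneg)
    (hsucc.dist tendsto_const_nhds) hM hstep)).symm

end HkContraction

theorem Hk_contraction_fixed_point {X : Type*} [MetricSpace X] [CompleteSpace X] [Nonempty X]
    (k : ℕ) (hk : 0 < k) (β : ℝ → ℝ) (hβ : IsGeraghty β) (T : (ℕ → X) → X)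
    (hT : ∀ a b : Fin k → X,
      dist (T (hatSeq k hk a)) (T (hatSeq k hk b)) ≤
        β (max (dist (a ⟨k - 1, by omega⟩) (b ⟨k - 1, by omega⟩))
            (max (dist (a ⟨k - 1, by omega⟩) (T (hatSeq k hk a)))
              (dist (b ⟨k - 1, by omega⟩) (T (hatSeq k hk b))))) *
          max (dist (a ⟨k - 1, by omega⟩) (b ⟨k - 1, by omega⟩))
            (max (dist (a ⟨k - 1, by omega⟩) (T (hatSeq k hk a)))
              (dist (b ⟨k - 1, by omega⟩) (T (hatSeq k hk b))))) :
    ∃ u : X, T (fun _ => u) = u ∧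
      ∀ x : ℕ → X, (∀ n, x (n + k) = T (hatSeq k hk (fun i : Fin k => x (n + i)))) →
        Tendsto x atTop (𝓝 u) := by
  have hT : IsHkContraction hk β T := hT
  obtain ⟨u, hu, -⟩ := hT.exists_isFixedPt_tendsto hβ
    (fun n _ => (fun v => T fun _ => v)^[n] (Classical.arbitrary X))
    fun n => (Function.iterate_succ_apply' (fun v => T fun _ => v) n _).symm
  refine ⟨u, hu, fun x hx => ?_⟩
  obtain ⟨v, hv, hxv⟩ := hT.exists_isFixedPt_tendsto hβ (fun n (i : Fin k) => x (n + i))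
    fun n => by rw [← hx]; congr 1; dsimp only; omega
  rw [hT.eq_of_isFixedPt hβ hu hv]
  exact (tendsto_add_atTop_iff_nat (k - 1)).1 hxv
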